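/- Let n = k·(2^d − 1), let ν be a strong Santha-Vazirani distribution with bias δ on {0,1}^n, and let f_d(y₁,…,y_k) = g_d(y₁)∘⋯∘g_d(y_k) where each y_i ∈ {0,1}^{2^d−1} and g_d maps a string to its Hamming-coset index in {0,1}^d. Then H_∞(f_d(Y)) ≥ kd − k·log₂((1+δ)/(1−δ)) for Y ∼ ν; hence the min-entropy rate of the output is at least 1 − (1/d)·log₂((1+δ)/(1−δ)). -/

import Mathlib

open Finset

/-- `μ` is a probability distribution on the finite type `A`. -/
def IsDist {A : Type*} [Fintype A] (μ : A → ℝ) : Prop :=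
  (∀ a, 0 ≤ μ a) ∧ ∑ a, μ a = 1

open Classical in
/-- Probability of an event under a distribution on a finite type. -/
noncomputable def Pr {A : Type*} [Fintype A] (μ : A → ℝ) (p : A → Prop) : ℝ :=
  ∑ a, if p a then μ a else 0

/-- `μ` is a strong Santha-Vazirani distribution with bias `δ`. -/
def IsStrongSV {n : ℕ} (δ : ℝ) (μ : (Fin n → ZMod 2) → ℝ) : Prop :=
  ∀ (i : Fin n) (z : Fin n → ZMod 2),
    0 < Pr μ (fun x => ∀ j, j ≠ i → x j = z j) →
      (1 - δ) / 2 * Pr μ (fun x => ∀ j, j ≠ i → x j = z j)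
          ≤ Pr μ (fun x => x i = 1 ∧ ∀ j, j ≠ i → x j = z j) ∧
        Pr μ (fun x => x i = 1 ∧ ∀ j, j ≠ i → x j = z j)
          ≤ (1 + δ) / 2 * Pr μ (fun x => ∀ j, j ≠ i → x j = z j)

/-- The parity-check matrix of the Hamming code. -/
def hammingMatrix (d : ℕ) (i : Fin d) (j : Fin (2 ^ d - 1)) : ZMod 2 :=
  if Nat.testBit ((j : ℕ) + 1) (i : ℕ) then 1 else 0

/-- Membership in the Hamming code of length `2^d − 1`. -/
def inHam (d : ℕ) (x : Fin (2 ^ d - 1) → ZMod 2) : Prop :=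
  ∀ i : Fin d, ∑ j, hammingMatrix d i j * x j = 0

/-- `e_i` with `e_0 = 0`. -/
def unitVec (d : ℕ) (i : Fin (2 ^ d)) (j : Fin (2 ^ d - 1)) : ZMod 2 :=
  if (j : ℕ) + 1 = (i : ℕ) then 1 else 0

/-- The `i`-th block (of length `2^d − 1`) of a string of `k·(2^d−1)` bits. -/
def block (d k : ℕ) (y : Fin (k * (2 ^ d - 1)) → ZMod 2) (i : Fin k)
    (j : Fin (2 ^ d - 1)) : ZMod 2 :=
  y ⟨(i : ℕ) * (2 ^ d - 1) + (j : ℕ), by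
    have hj := j.isLt
    have hi : (i : ℕ) + 1 ≤ k := i.isLt
    have h1 : (i : ℕ) * (2 ^ d - 1) + (j : ℕ) < ((i : ℕ) + 1) * (2 ^ d - 1) := by
      rw [add_mul, one_mul]; exact Nat.add_lt_add_left hj _
    exact h1.trans_le (Nat.mul_le_mul_right _ hi)⟩


/-!
Translate the event `E = {y | the i-th block of y lies in the coset Ham + e_{u i} for every i}`
by the `2^{dk}` vectors whose `i`-th block is `e_{a i}`, one for each `a : Fin k → Fin (2^d)`.
These translates are pairwise disjoint, since the syndrome of the `i`-th block of a translate
recovers `a i`. Each translation flips at most `k` bits, and by the strong SV property one bit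
flip changes the probability of a point by a factor at most `(1+δ)/(1−δ)`. Hence
`2^{dk} ((1−δ)/(1+δ))^k ν(E) ≤ 1`.
-/
section FiniteProbability

variable {A : Type*} [Fintype A]

theorem Pr_eq_sum_of_iff (μ : A → ℝ) {p : A → Prop} {s : Finset A}
    (h : ∀ a, p a ↔ a ∈ s) : Pr μ p = ∑ a ∈ s, μ a := by
  classical
  rw [Pr, ← Finset.sum_filter]
  congr 1
  ext a
  simp [h]

theorem card_mul_mul_Pr_le_one {τ : Type*} [Fintype τ] {μ : A → ℝ} (hμ : IsDist μ)
    {p : A → Prop} (T : τ → A → A) {c : ℝ} (hT : ∀ e a, c * μ a ≤ μ (T e a))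
    (hinj : ∀ e e' a a', p a → p a' → T e a = T e' a' → e = e' ∧ a = a') :
    Fintype.card τ * c * Pr μ p ≤ 1 := by
  classical
  set S := univ.filter p
  have hS : ∀ a, p a ↔ a ∈ S := by simp [S]
  have hinjOn : Set.InjOn (fun q : τ × A => T q.1 q.2) (univ ×ˢ S : Finset (τ × A)) := by
    rintro ⟨e, a⟩ hea ⟨e', a'⟩ hea' heq
    simp only [coe_product, coe_univ, Set.mem_prod, Set.mem_univ, true_and, mem_coe, ← hS]
      at hea hea'
    obtain ⟨rfl, rfl⟩ := hinj e e' a a' hea hea' heq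
    rfl
  calc (Fintype.card τ : ℝ) * c * Pr μ p = ∑ _e : τ, ∑ a ∈ S, c * μ a := by
        rw [Pr_eq_sum_of_iff μ hS, sum_const, ← mul_sum, card_univ, nsmul_eq_mul, mul_assoc]
    _ ≤ ∑ e : τ, ∑ a ∈ S, μ (T e a) := sum_le_sum fun e _ => sum_le_sum fun a _ => hT e a
    _ = ∑ b ∈ (univ ×ˢ S).image (fun q : τ × A => T q.1 q.2), μ b := by
        rw [sum_image hinjOn, sum_product]
    _ ≤ ∑ b, μ b := sum_le_univ_sum_of_nonneg hμ.1
    _ = 1 := hμ.2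

end FiniteProbability

theorem hammingDist_update_add_one {ι : Type*} [Fintype ι] [DecidableEq ι] {β : ι → Type*}
    [∀ i, DecidableEq (β i)] {x y : ∀ i, β i} {i : ι} (h : x i ≠ y i) :
    hammingDist (Function.update x i (y i)) y + 1 = hammingDist x y := by
  have hdiff : ({j | Function.update x i (y i) j ≠ y j} : Finset ι)
      = ({j | x j ≠ y j} : Finset ι).erase i := by
    ext j
    by_cases hj : j = i
    · subst hj; simp
    · simp [hj, Function.update_of_ne]
  rw [hammingDist, hammingDist, hdiff, card_erase_add_one (by simpa using h)]

theorem forall_ne_eq_iff_eq_or_eq {ι : Type*} {i : ι} {x y z : ι → ZMod 2} (hi : x i ≠ y i)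
    (hxy : ∀ j, j ≠ i → x j = y j) : (∀ j, j ≠ i → z j = y j) ↔ z = x ∨ z = y := by
  have hval : ∀ a b c : ZMod 2, a ≠ b → c = a ∨ c = b := by decide
  constructor
  · intro hz
    refine (hval _ _ (z i) hi).imp (fun hzi => ?_) (fun hzi => ?_) <;> funext j <;>
      by_cases hj : j = i <;> simp_all
  · rintro (rfl | rfl)
    exacts [hxy, fun _ _ => rfl]

namespace IsStrongSV

variable {n : ℕ} {δ : ℝ} {μ : (Fin n → ZMod 2) → ℝ}

theorem mul_le_mul_of_eq_off (hμ : ∀ x, 0 ≤ μ x) (hsv : IsStrongSV δ μ) {i : Fin n}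
    {x y : Fin n → ZMod 2} (hi : x i ≠ y i) (hxy : ∀ j, j ≠ i → x j = y j) :
    (1 - δ) * μ x ≤ (1 + δ) * μ y := by
  classical
  have hline (z : Fin n → ZMod 2) :
      (∀ j, j ≠ i → z j = y j) ↔ z ∈ ({x, y} : Finset _) := by
    rw [forall_ne_eq_iff_eq_or_eq hi hxy, mem_insert, mem_singleton]
  have hxy' : x ≠ y := fun h => hi (congrFun h i)
  have hP : Pr μ (fun z => ∀ j, j ≠ i → z j = y j) = μ x + μ y := by
    rw [Pr_eq_sum_of_iff μ hline, sum_pair hxy']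
  have hQ : Pr μ (fun z => z i = 1 ∧ ∀ j, j ≠ i → z j = y j)
      = ∑ z ∈ ({x, y} : Finset _).filter (· i = 1), μ z :=
    Pr_eq_sum_of_iff μ fun z => by rw [hline, mem_filter, and_comm]
  rcases (add_nonneg (hμ x) (hμ y)).eq_or_lt with hzero | hpos
  · have hx : μ x = 0 := by linarith [hμ x, hμ y]
    have hy : μ y = 0 := by linarith [hμ x, hμ y]
    simp [hx, hy]
  obtain ⟨hlo, hhi⟩ := hsv i y (hP ▸ hpos)
  rw [hP] at hlo hhi
  have hcases : ∀ a b : ZMod 2, a ≠ b → a = 1 ∧ b = 0 ∨ a = 0 ∧ b = 1 := by decide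
  rcases hcases _ _ hi with ⟨hx, hy⟩ | ⟨hx, hy⟩
  · have : Pr μ (fun z => z i = 1 ∧ ∀ j, j ≠ i → z j = y j) = μ x := by
      simp [hQ, filter_insert, filter_singleton, hx, hy]
    linarith
  · have : Pr μ (fun z => z i = 1 ∧ ∀ j, j ≠ i → z j = y j) = μ y := by
      simp [hQ, filter_insert, filter_singleton, hx, hy]
    linarith

theorem pow_hammingDist_mul_le (hμ : ∀ x, 0 ≤ μ x) (hsv : IsStrongSV δ μ) (hδ0 : 0 ≤ δ)
    (hδ1 : δ ≤ 1) (x y : Fin n → ZMod 2) :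
    ((1 - δ) / (1 + δ)) ^ hammingDist x y * μ x ≤ μ y := by
  set c := (1 - δ) / (1 + δ)
  induction hm : hammingDist x y generalizing x with
  | zero => simp [hammingDist_eq_zero.1 hm]
  | succ m ih =>
    obtain ⟨i, hi⟩ : ∃ i, x i ≠ y i := Function.ne_iff.1 (hammingDist_ne_zero.1 (by omega))
    set x' := Function.update x i (y i)
    have hflip : c * μ x ≤ μ x' := by
      rw [div_mul_eq_mul_div, div_le_iff₀ (by linarith), mul_comm (μ x')]
      exact hsv.mul_le_mul_of_eq_off hμ (by simpa [x'] using hi)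
        fun j hj => (Function.update_of_ne hj _ _).symm
    have hdist : hammingDist x' y + 1 = hammingDist x y := hammingDist_update_add_one hi
    calc c ^ (m + 1) * μ x = c ^ m * (c * μ x) := by ring
      _ ≤ c ^ m * μ x' :=
        mul_le_mul_of_nonneg_left hflip (pow_nonneg (div_nonneg (by linarith) (by linarith)) _)
      _ ≤ μ y := ih x' (by omega)

end IsStrongSV

section HammingCode

variable {d : ℕ}

def hammingSyndrome (d : ℕ) : (Fin (2 ^ d - 1) → ZMod 2) →ₗ[ZMod 2] Fin d → ZMod 2 :=
  Matrix.mulVecLin (Matrix.of (hammingMatrix d))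

theorem inHam_iff {x : Fin (2 ^ d - 1) → ZMod 2} : inHam d x ↔ hammingSyndrome d x = 0 := by
  simp [inHam, hammingSyndrome, funext_iff, Matrix.mulVec, dotProduct]

theorem exists_inHam_eq_add_unitVec_iff {x : Fin (2 ^ d - 1) → ZMod 2} {a : Fin (2 ^ d)} :
    (∃ c, inHam d c ∧ x = c + unitVec d a) ↔
      hammingSyndrome d x = hammingSyndrome d (unitVec d a) := by
  simp_rw [inHam_iff]
  constructor
  · rintro ⟨c, hc, rfl⟩
    rw [map_add, hc, zero_add]
  · intro h
    exact ⟨x - unitVec d a, by rw [map_sub, h, sub_self], (sub_add_cancel _ _).symm⟩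

theorem hammingSyndrome_unitVec (a : Fin (2 ^ d)) :
    hammingSyndrome d (unitVec d a) =
      fun i : Fin d => if (a : ℕ).testBit i then (1 : ZMod 2) else 0 := by
  ext i
  simp only [hammingSyndrome, Matrix.mulVecLin_apply, Matrix.mulVec, dotProduct, Matrix.of_apply,
    hammingMatrix, unitVec, mul_ite, mul_one, mul_zero]
  rcases Nat.eq_zero_or_pos a with ha | ha
  · simp [ha]
  · rw [Fintype.sum_eq_single ⟨a - 1, by omega⟩
      fun j hj => if_neg fun h => hj (by ext; simp only; omega)]
    simp [Nat.sub_add_cancel ha]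

theorem hammingSyndrome_unitVec_injective :
    Function.Injective fun a : Fin (2 ^ d) => hammingSyndrome d (unitVec d a) := by
  intro a b h
  simp only [hammingSyndrome_unitVec] at h
  ext
  apply Nat.eq_of_testBit_eq
  intro i
  by_cases hi : i < d
  · have := congrFun h ⟨i, hi⟩
    split_ifs at this <;> simp_all
  · have hle : 2 ^ d ≤ 2 ^ i := Nat.pow_le_pow_right two_pos (not_lt.1 hi)
    rw [Nat.testBit_lt_two_pow (a.isLt.trans_le hle),
      Nat.testBit_lt_two_pow (b.isLt.trans_le hle)]

end HammingCode

section Blocks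

variable {d k : ℕ}

theorem block_apply (y : Fin (k * (2 ^ d - 1)) → ZMod 2) (i : Fin k) (j : Fin (2 ^ d - 1)) :
    block d k y i j = y (finProdFinEquiv (i, j)) := by
  simp only [block]
  congr 1
  ext
  simp [Nat.add_comm, Nat.mul_comm]

def blockShift (d k : ℕ) (e : Fin k → Fin (2 ^ d)) (p : Fin (k * (2 ^ d - 1))) : ZMod 2 :=
  unitVec d (e (finProdFinEquiv.symm p).1) (finProdFinEquiv.symm p).2

theorem block_add_blockShift (y : Fin (k * (2 ^ d - 1)) → ZMod 2) (e : Fin k → Fin (2 ^ d))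
    (i : Fin k) : block d k (y + blockShift d k e) i = block d k y i + unitVec d (e i) := by
  ext j
  simp [block_apply, blockShift]

theorem hammingNorm_blockShift_le (e : Fin k → Fin (2 ^ d)) :
    hammingNorm (blockShift d k e) ≤ k := by
  have hunit : ∀ {a : Fin (2 ^ d)} {j}, unitVec d a j ≠ 0 → (j : ℕ) + 1 = a :=
    fun h => by_contra fun h' => h (if_neg h')
  calc hammingNorm (blockShift d k e) ≤ #(univ : Finset (Fin k)) := by
        refine card_le_card_of_injOn (fun p => (finProdFinEquiv.symm p).1) (by simp) ?_
        intro p hp q hq (hpq : (finProdFinEquiv.symm p).1 = (finProdFinEquiv.symm q).1)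
        simp only [mem_coe, mem_filter, mem_univ, true_and] at hp hq
        refine finProdFinEquiv.symm.injective (Prod.ext hpq (Fin.ext ?_))
        have hp' := hunit hp
        have hq' := hunit hq
        rw [hpq] at hp'
        omega
    _ = k := card_fin k

theorem eq_and_eq_of_add_blockShift_eq {y y' : Fin (k * (2 ^ d - 1)) → ZMod 2}
    {e e' : Fin k → Fin (2 ^ d)}
    (hyy' : ∀ i, hammingSyndrome d (block d k y i) = hammingSyndrome d (block d k y' i))
    (h : y + blockShift d k e = y' + blockShift d k e') : e = e' ∧ y = y' := by
  obtain rfl : e = e' := funext fun i => hammingSyndrome_unitVec_injective <| by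
    have := congrArg (fun z => hammingSyndrome d (block d k z i)) h
    simp only [block_add_blockShift, map_add, hyy' i] at this
    exact add_left_cancel this
  exact ⟨rfl, add_right_cancel h⟩

theorem IsStrongSV.pow_mul_le_add_blockShift {δ : ℝ}
    {ν : (Fin (k * (2 ^ d - 1)) → ZMod 2) → ℝ}
    (hν : ∀ y, 0 ≤ ν y) (hsv : IsStrongSV δ ν) (hδ0 : 0 ≤ δ) (hδ1 : δ ≤ 1)
    (e : Fin k → Fin (2 ^ d)) (y : Fin (k * (2 ^ d - 1)) → ZMod 2) :
    ((1 - δ) / (1 + δ)) ^ k * ν y ≤ ν (y + blockShift d k e) := by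
  have hdist : hammingDist y (y + blockShift d k e) ≤ k := by
    rw [hammingDist_eq_hammingNorm, neg_add_cancel_left]
    exact hammingNorm_blockShift_le e
  calc ((1 - δ) / (1 + δ)) ^ k * ν y
      ≤ ((1 - δ) / (1 + δ)) ^ hammingDist y (y + blockShift d k e) * ν y := by
        gcongr ?_ * _
        · exact hν y
        exact pow_le_pow_of_le_one (div_nonneg (by linarith) (by linarith))
          (div_le_one_of_le₀ (by linarith) (by linarith)) hdist
    _ ≤ ν (y + blockShift d k e) := hsv.pow_hammingDist_mul_le hν hδ0 hδ1 _ _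

end Blocks

theorem condenser_min_entropy_general (d k : ℕ)
    (δ : ℝ) (hδ0 : 0 ≤ δ) (hδ1 : δ < 1)
    (ν : (Fin (k * (2 ^ d - 1)) → ZMod 2) → ℝ) (hν : IsDist ν)
    (hsv : IsStrongSV δ ν) :
    ∀ u : Fin k → Fin (2 ^ d),
      Pr ν (fun y => ∀ i : Fin k, ∃ c, inHam d c ∧ block d k y i = c + unitVec d (u i))
        ≤ ((1 + δ) / (1 - δ) * ((2 : ℝ) ^ d)⁻¹) ^ k := by
  intro u
  simp_rw [exists_inHam_eq_add_unitVec_iff]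
  have hpos : 0 < ((2 : ℝ) ^ d) ^ k * ((1 - δ) / (1 + δ)) ^ k := by
    have : 0 < 1 - δ := by linarith
    positivity
  have hcard : ((2 : ℝ) ^ d) ^ k = Fintype.card (Fin k → Fin (2 ^ d)) := by simp
  calc Pr ν _ ≤ (((2 : ℝ) ^ d) ^ k * ((1 - δ) / (1 + δ)) ^ k)⁻¹ := by
        rw [← one_div, le_div_iff₀' hpos, hcard]
        exact card_mul_mul_Pr_le_one hν (fun e y => y + blockShift d k e)
          (hsv.pow_mul_le_add_blockShift hν.1 hδ0 hδ1.le) fun e e' y y' hy hy' h =>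
            eq_and_eq_of_add_blockShift_eq (fun i => (hy i).trans (hy' i).symm) h
    _ = ((1 + δ) / (1 - δ) * ((2 : ℝ) ^ d)⁻¹) ^ k := by
        rw [← mul_pow, ← inv_pow, mul_inv, mul_comm, inv_div]

/-- The block-wise Hamming condenser `f_d` applied to a strong SV source: for
`Y ∼ ν`, every output value `(u₁,…,u_k)` of `f_d(Y)` has probability at most
`(((1+δ)/(1−δ))·2^{−d})^k`, i.e. `H_∞(f_d(Y)) ≥ kd − k·log₂((1+δ)/(1−δ))`, so the
output min-entropy rate is at least `1 − (1/d)·log₂((1+δ)/(1−δ))`. -/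
theorem condenser_min_entropy (d k : ℕ) (hd : 1 ≤ d)
    (δ : ℝ) (hδ0 : 0 ≤ δ) (hδ1 : δ < 1)
    (ν : (Fin (k * (2 ^ d - 1)) → ZMod 2) → ℝ) (hν : IsDist ν)
    (hsv : IsStrongSV δ ν) :
    ∀ u : Fin k → Fin (2 ^ d),
      Pr ν (fun y => ∀ i : Fin k, ∃ c, inHam d c ∧ block d k y i = c + unitVec d (u i))
        ≤ ((1 + δ) / (1 - δ) * ((2 : ℝ) ^ d)⁻¹) ^ k :=
  condenser_min_entropy_general d k δ hδ0 hδ1 ν hν hsv
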